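/- arXiv:1810.10355 — 3 statements merged into one kernel-verified Lean document; each statement's English description precedes it below -/
import Mathlib

section
/- With G, λ = (1;0,0), gr(ρ₁) = (−1/2; 1/2, −1/2), gr(ρ₂) = (−1/2; 1/2, 1/2), gr(ρ₃) = (−1/2; −1/2, 1/2), and f̃± defined as before, the following congruences hold modulo 2 for every g ∈ G: (1) f̃±(λ·g) ≡ f̃±(g) + 1; (2) f̃₊(gr(ρ₁)·g) ≡ f̃₋(g); (3) f̃₋(gr(ρ₂)·g) ≡ f̃₊(g) + 1; (4) f̃₊(gr(ρ₃)·g) ≡ f̃₋(g). -/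
/-- `x` is an integer rational. -/
def IsIntQ (x : ℚ) : Prop := ∃ k : ℤ, x = (k : ℚ)

/-- `x` is a half-integer rational (an element of (1/2)ℤ). -/
def IsHalfIntQ (x : ℚ) : Prop := ∃ k : ℤ, x = (k : ℚ) / 2

/-- Membership in the grading group `G`: a triple `(m; i, j)` of half-integers
with `i + j ∈ ℤ` and `m ∈ ℤ` iff `i, j ∈ ℤ` and `i + j ∈ 2ℤ`. -/
def MemG (x : ℚ × ℚ × ℚ) : Prop :=
  IsHalfIntQ x.1 ∧ IsHalfIntQ x.2.1 ∧ IsHalfIntQ x.2.2 ∧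
  IsIntQ (x.2.1 + x.2.2) ∧
  (IsIntQ x.1 ↔ (IsIntQ x.2.1 ∧ IsIntQ x.2.2 ∧ ∃ k : ℤ, x.2.1 + x.2.2 = 2 * (k : ℚ)))

/-- The multiplication `(m; i, j)·(m'; i', j') = (m + m' + i·j' − j·i'; i + i', j + j')`. -/
def Gmul (x y : ℚ × ℚ × ℚ) : ℚ × ℚ × ℚ :=
  (x.1 + y.1 + (x.2.1 * y.2.2 - x.2.2 * y.2.1), x.2.1 + y.2.1, x.2.2 + y.2.2)

/-- The inversion `(m; i, j)⁻¹ = (−m; −i, −j)`. -/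
def Ginv (x : ℚ × ℚ × ℚ) : ℚ × ℚ × ℚ := (-x.1, -x.2.1, -x.2.2)

open scoped Classical in
/-- The function `f̃₊` (for `s = 1`) resp. `f̃₋` (for `s = −1`) on triples
`(m; i, j)`: equal to `m + (i+j)/2` if `i, j ∈ ℤ` have the same parity,
to `m + s·(j−i)/2` if `i, j ∈ ℤ` have different parity, and to
`m + (i + s/2)(j + s/2) + s/2` if `i, j ∉ ℤ`. -/
noncomputable def Ftilde (s : ℚ) (x : ℚ × ℚ × ℚ) : ℚ :=
  if IsIntQ x.2.1 ∧ IsIntQ x.2.2 then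
    if ∃ k : ℤ, x.2.1 + x.2.2 = 2 * (k : ℚ) then x.1 + (x.2.1 + x.2.2) / 2
    else x.1 + s * (x.2.2 - x.2.1) / 2
  else x.1 + (x.2.1 + s / 2) * (x.2.2 + s / 2) + s / 2
lemma not_isIntQ_half (k : ℤ) : ¬ IsIntQ ((k:ℚ) + 1/2) := by
  rintro ⟨n, hn⟩
  have h : (2*k+1 : ℤ) = (2*n : ℤ) := by exact_mod_cast (by linarith : (2*(k:ℚ)+1) = 2*n)
  omega

lemma Ftilde_same (s : ℚ) (x : ℚ × ℚ × ℚ) (a b c : ℤ) (h2 : x.2.1 = a) (h3 : x.2.2 = b)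
    (hc : a + b = 2*c) : Ftilde s x = x.1 + c := by
  have hq : x.2.1 + x.2.2 = 2*(c:ℚ) := by rw [h2, h3]; exact_mod_cast hc
  rw [Ftilde, if_pos ⟨⟨a, h2⟩, ⟨b, h3⟩⟩, if_pos ⟨c, hq⟩, hq]; ring

lemma Ftilde_diff (s : ℚ) (x : ℚ × ℚ × ℚ) (a b : ℤ) (h2 : x.2.1 = a) (h3 : x.2.2 = b)
    (hc : ∀ k : ℤ, a + b ≠ 2*k) : Ftilde s x = x.1 + s*(x.2.2 - x.2.1)/2 := by
  rw [Ftilde, if_pos ⟨⟨a,h2⟩,⟨b,h3⟩⟩, if_neg]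
  rintro ⟨k, hk⟩
  rw [h2, h3] at hk
  exact hc k (by exact_mod_cast hk)

lemma Ftilde_half (s : ℚ) (x : ℚ × ℚ × ℚ) (a : ℤ) (h2 : x.2.1 = (a:ℚ) + 1/2) :
    Ftilde s x = x.1 + (x.2.1 + s/2)*(x.2.2 + s/2) + s/2 := by
  rw [Ftilde, if_neg]
  rintro ⟨h, -⟩
  rw [h2] at h
  exact not_isIntQ_half a h

lemma Ftilde_lambda (s : ℚ) (x : ℚ × ℚ × ℚ) :
    Ftilde s (Gmul (1,0,0) x) = Ftilde s x + 1 := by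
  have hg : Gmul (1,0,0) x = (1 + x.1, x.2.1, x.2.2) := by simp [Gmul]
  rw [hg]; unfold Ftilde; dsimp only; split_ifs <;> ring

-- integer case values
lemma F_int_even (s : ℚ) (m : ℚ) (a b c : ℤ) (h : a + b = 2*c) :
    Ftilde s (m, (a:ℚ), (b:ℚ)) = m + c :=
  Ftilde_same s _ a b c rfl rfl h

lemma F_int_odd (s : ℚ) (m : ℚ) (a b c : ℤ) (h : a + b = 2*c+1) :
    Ftilde s (m, (a:ℚ), (b:ℚ)) = m + s*((b:ℚ) - a)/2 :=
  Ftilde_diff s _ a b rfl rfl (by omega)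

lemma F_half (s : ℚ) (m : ℚ) (a b : ℤ) :
    Ftilde s (m, (a:ℚ)+1/2, (b:ℚ)+1/2)
      = m + ((a:ℚ)+1/2+s/2)*((b:ℚ)+1/2+s/2) + s/2 :=
  Ftilde_half s _ a rfl

lemma r1_int (m : ℚ) (a b : ℤ) :
    Ftilde 1 (Gmul (-1/2, 1/2, -1/2) (m, (a:ℚ), (b:ℚ)))
      = m + ((a:ℚ)+b)/2 + ((a:ℚ)+1)*b := by
  rw [Ftilde_half 1 _ a (by simp [Gmul]; ring)]
  simp [Gmul]; ring

lemma r2_int (m : ℚ) (a b : ℤ) :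
    Ftilde (-1) (Gmul (-1/2, 1/2, 1/2) (m, (a:ℚ), (b:ℚ)))
      = m - 1 + ((b:ℚ)-a)/2 + (a:ℚ)*b := by
  rw [Ftilde_half (-1) _ a (by simp [Gmul]; ring)]
  simp [Gmul]; ring

lemma r3_int (m : ℚ) (a b : ℤ) :
    Ftilde 1 (Gmul (-1/2, -1/2, 1/2) (m, (a:ℚ), (b:ℚ)))
      = m - ((a:ℚ)+b)/2 + (a:ℚ)*((b:ℚ)+1) := by
  rw [Ftilde_half 1 _ (a-1) (by simp [Gmul]; push_cast; ring)]
  simp [Gmul]; ring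

lemma r1_half_even (m : ℚ) (a b d : ℤ) (h : a + b = 2*d) :
    Ftilde 1 (Gmul (-1/2, 1/2, -1/2) (m, (a:ℚ)+1/2, (b:ℚ)+1/2)) = m - 1/2 + b := by
  rw [Ftilde_diff 1 _ (a+1) b (by simp [Gmul]; push_cast; ring) (by simp [Gmul]; ring)
    (by omega)]
  simp [Gmul]; ring

lemma r1_half_odd (m : ℚ) (a b d : ℤ) (h : a + b = 2*d+1) :
    Ftilde 1 (Gmul (-1/2, 1/2, -1/2) (m, (a:ℚ)+1/2, (b:ℚ)+1/2)) = m + a + b + 1/2 := by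
  rw [Ftilde_same 1 _ (a+1) b (d+1) (by simp [Gmul]; push_cast; ring) (by simp [Gmul]; ring)
    (by omega)]
  have h' : (a:ℚ) + b = 2*d+1 := by exact_mod_cast h
  simp [Gmul]; push_cast; linarith

lemma r2_half_even (m : ℚ) (a b d : ℤ) (h : a + b = 2*d) :
    Ftilde (-1) (Gmul (-1/2, 1/2, 1/2) (m, (a:ℚ)+1/2, (b:ℚ)+1/2)) = m + 1/2 + b := by
  rw [Ftilde_same (-1) _ (a+1) (b+1) (d+1) (by simp [Gmul]; push_cast; ring)
    (by simp [Gmul]; push_cast; ring) (by omega)]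
  have h' : (a:ℚ) + b = 2*d := by exact_mod_cast h
  simp [Gmul]; push_cast; linarith

lemma r2_half_odd (m : ℚ) (a b d : ℤ) (h : a + b = 2*d+1) :
    Ftilde (-1) (Gmul (-1/2, 1/2, 1/2) (m, (a:ℚ)+1/2, (b:ℚ)+1/2)) = m - 1/2 := by
  rw [Ftilde_diff (-1) _ (a+1) (b+1) (by simp [Gmul]; push_cast; ring)
    (by simp [Gmul]; push_cast; ring) (by omega)]
  simp [Gmul]; ring

lemma r3_half_even (m : ℚ) (a b d : ℤ) (h : a + b = 2*d) :
    Ftilde 1 (Gmul (-1/2, -1/2, 1/2) (m, (a:ℚ)+1/2, (b:ℚ)+1/2)) = m - 1/2 - a := by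
  rw [Ftilde_diff 1 _ a (b+1) (by simp [Gmul]; ring) (by simp [Gmul]; push_cast; ring)
    (by omega)]
  simp [Gmul]; ring

lemma r3_half_odd (m : ℚ) (a b d : ℤ) (h : a + b = 2*d+1) :
    Ftilde 1 (Gmul (-1/2, -1/2, 1/2) (m, (a:ℚ)+1/2, (b:ℚ)+1/2)) = m - 1/2 := by
  rw [Ftilde_same 1 _ a (b+1) (d+1) (by simp [Gmul]; ring) (by simp [Gmul]; push_cast; ring)
    (by omega)]
  have h' : (a:ℚ) + b = 2*d+1 := by exact_mod_cast h
  simp [Gmul]; push_cast; linarith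

/-- Modulo 2, for every `g ∈ G`: (1) `f̃±(λ·g) ≡ f̃±(g) + 1`;
(2) `f̃₊(gr(ρ₁)·g) ≡ f̃₋(g)`; (3) `f̃₋(gr(ρ₂)·g) ≡ f̃₊(g) + 1`;
(4) `f̃₊(gr(ρ₃)·g) ≡ f̃₋(g)`, where `λ = (1;0,0)`,
`gr(ρ₁) = (−1/2; 1/2, −1/2)`, `gr(ρ₂) = (−1/2; 1/2, 1/2)`,
`gr(ρ₃) = (−1/2; −1/2, 1/2)`. -/
theorem stmt_11 (x : ℚ × ℚ × ℚ) (hx : MemG x) :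
    (∃ k : ℤ, Ftilde 1 (Gmul (1, 0, 0) x) - (Ftilde 1 x + 1) = 2 * (k : ℚ)) ∧
    (∃ k : ℤ, Ftilde (-1) (Gmul (1, 0, 0) x) - (Ftilde (-1) x + 1) = 2 * (k : ℚ)) ∧
    (∃ k : ℤ, Ftilde 1 (Gmul (-1/2, 1/2, -1/2) x) - Ftilde (-1) x = 2 * (k : ℚ)) ∧
    (∃ k : ℤ, Ftilde (-1) (Gmul (-1/2, 1/2, 1/2) x) - (Ftilde 1 x + 1) = 2 * (k : ℚ)) ∧
    (∃ k : ℤ, Ftilde 1 (Gmul (-1/2, -1/2, 1/2) x) - Ftilde (-1) x = 2 * (k : ℚ)) := by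
  refine ⟨⟨0, by rw [Ftilde_lambda]; ring⟩, ⟨0, by rw [Ftilde_lambda]; ring⟩, ?_⟩
  obtain ⟨m, i, j⟩ := x
  simp only [MemG, IsHalfIntQ] at hx
  obtain ⟨⟨p, hp⟩, ⟨ai, hai⟩, ⟨bj, hbj⟩, ⟨cij, hcij⟩, hiff⟩ := hx

  have hsum : ai + bj = 2 * cij := by
    have h : (ai:ℚ) + bj = 2*cij := by
      have h1 := hcij; rw [hai, hbj] at h1; linarith
    exact_mod_cast h
  rcases Int.even_or_odd ai with ⟨a, ha⟩ | ⟨a, ha⟩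
  · -- i, j integers
    obtain ⟨b, hb⟩ : ∃ b, bj = b + b := ⟨cij - a, by omega⟩
    have hi : i = (a:ℚ) := by rw [hai, ha]; push_cast; ring
    have hj : j = (b:ℚ) := by rw [hbj, hb]; push_cast; ring
    subst hi; subst hj
    have hab : a + b = cij := by omega
    rcases Int.even_or_odd cij with ⟨c, hc⟩ | ⟨c, hc⟩
    · -- same parity: m is an integer
      have hmi : IsIntQ m :=
        hiff.mpr ⟨⟨a, rfl⟩, ⟨b, rfl⟩, c, by exact_mod_cast (show a + b = 2*c by omega)⟩
      obtain ⟨q, hq⟩ := hmi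
      subst hq
      have habc : a + b = 2*c := by omega
      rcases Int.even_or_odd a with ⟨t, ht⟩ | ⟨t, ht⟩
      · have hbv : b = 2*c - (t+t) := by omega
        subst ht; subst hbv
        refine ⟨⟨(c-t)*(2*t+1), ?_⟩, ⟨t*(2*c-2*t-1)-1, ?_⟩, ⟨(c-t)*(2*t-1), ?_⟩⟩
        · rw [r1_int, F_int_even (-1) _ _ _ c (by ring)]; push_cast; ring
        · rw [r2_int, F_int_even 1 _ _ _ c (by ring)]; push_cast; ring
        · rw [r3_int, F_int_even (-1) _ _ _ c (by ring)]; push_cast; ring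
      · have hbv : b = 2*c - (2*t+1) := by omega
        subst ht; subst hbv
        refine ⟨⟨(2*c-2*t-1)*(t+1), ?_⟩, ⟨(2*t+1)*(c-t-1)-1, ?_⟩, ⟨(2*c-2*t-1)*t, ?_⟩⟩
        · rw [r1_int, F_int_even (-1) _ _ _ c (by ring)]; push_cast; ring
        · rw [r2_int, F_int_even 1 _ _ _ c (by ring)]; push_cast; ring
        · rw [r3_int, F_int_even (-1) _ _ _ c (by ring)]; push_cast; ring
    · -- different parity: m is a strict half-integer
      have hpodd : ∃ q, p = 2*q + 1 := by
        rcases Int.even_or_odd p with ⟨q, hq⟩ | ⟨q, hq⟩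
        · exfalso
          have hmi : IsIntQ m := ⟨q, by rw [hp, hq]; push_cast; ring⟩
          obtain ⟨-, -, k, hk⟩ := hiff.mp hmi
          have : a + b = 2*k := by exact_mod_cast hk
          omega
        · exact ⟨q, hq⟩
      obtain ⟨q, hq⟩ := hpodd
      have hm : m = (q:ℚ) + 1/2 := by rw [hp, hq]; push_cast; ring
      subst hm
      have habc : a + b = 2*c + 1 := by omega
      rcases Int.even_or_odd a with ⟨t, ht⟩ | ⟨t, ht⟩
      · have hbv : b = 2*c + 1 - (t+t) := by omega
        subst ht; subst hbv
        refine ⟨⟨t*(2*c+1-(t+t))+(2*c+1-(t+t)), ?_⟩, ⟨t*(2*c+1-(t+t))-1, ?_⟩,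
          ⟨t*(2*c+1-(t+t)), ?_⟩⟩
        · rw [r1_int, F_int_odd (-1) _ _ _ c (by ring)]; push_cast; ring
        · rw [r2_int, F_int_odd 1 _ _ _ c (by ring)]; push_cast; ring
        · rw [r3_int, F_int_odd (-1) _ _ _ c (by ring)]; push_cast; ring
      · have hbv : b = 2*(c-t) := by omega
        subst ht; subst hbv
        refine ⟨⟨(2*t+1)*(c-t)+2*(c-t), ?_⟩, ⟨(2*t+1)*(c-t)-1, ?_⟩, ⟨(2*t+1)*(c-t), ?_⟩⟩
        · rw [r1_int, F_int_odd (-1) _ _ _ c (by ring)]; push_cast; ring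
        · rw [r2_int, F_int_odd 1 _ _ _ c (by ring)]; push_cast; ring
        · rw [r3_int, F_int_odd (-1) _ _ _ c (by ring)]; push_cast; ring
  · -- i, j strict half-integers
    obtain ⟨b, hbo⟩ : ∃ b, bj = 2*b + 1 := ⟨cij - a - 1, by omega⟩
    have hi : i = (a:ℚ) + 1/2 := by rw [hai, ha]; push_cast; ring
    have hj : j = (b:ℚ) + 1/2 := by rw [hbj, hbo]; push_cast; ring
    subst hi; subst hj
    have hpodd : ∃ q, p = 2*q + 1 := by
      rcases Int.even_or_odd p with ⟨q, hq⟩ | ⟨q, hq⟩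
      · exfalso
        have hmi : IsIntQ m := ⟨q, by rw [hp, hq]; push_cast; ring⟩
        obtain ⟨hia, -, -⟩ := hiff.mp hmi
        exact not_isIntQ_half a hia
      · exact ⟨q, hq⟩
    obtain ⟨q, hq⟩ := hpodd
    have hm : m = (q:ℚ) + 1/2 := by rw [hp, hq]; push_cast; ring
    subst hm
    rcases Int.even_or_odd (a + b) with ⟨d, hd⟩ | ⟨d, hd⟩
    · rcases Int.even_or_odd a with ⟨t, ht⟩ | ⟨t, ht⟩
      · have hbv : b = 2*d - (t+t) := by omega
        subst ht; subst hbv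
        refine ⟨⟨(d-t)*(1-2*t), ?_⟩, ⟨-t*(2*d-2*t+1)-1, ?_⟩, ⟨-t*(2*d-2*t+1), ?_⟩⟩
        · rw [r1_half_even _ _ _ d (by ring), F_half]; push_cast; ring
        · rw [r2_half_even _ _ _ d (by ring), F_half]; push_cast; ring
        · rw [r3_half_even _ _ _ d (by ring), F_half]; push_cast; ring
      · have hbv : b = 2*d - (2*t+1) := by omega
        subst ht; subst hbv
        refine ⟨⟨-(2*d-2*t-1)*t, ?_⟩, ⟨-(2*t+1)*(d-t)-1, ?_⟩, ⟨-(2*t+1)*(d-t), ?_⟩⟩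
        · rw [r1_half_even _ _ _ d (by ring), F_half]; push_cast; ring
        · rw [r2_half_even _ _ _ d (by ring), F_half]; push_cast; ring
        · rw [r3_half_even _ _ _ d (by ring), F_half]; push_cast; ring
    · rcases Int.even_or_odd a with ⟨t, ht⟩ | ⟨t, ht⟩
      · have hbv : b = 2*d + 1 - (t+t) := by omega
        subst ht; subst hbv
        refine ⟨⟨d+1-t*(2*d+1-(t+t)), ?_⟩, ⟨-(2*t+1)*(d+1-t)-1, ?_⟩,
          ⟨-t*(2*d+1-(t+t)), ?_⟩⟩
        · rw [r1_half_odd _ _ _ d (by ring), F_half]; push_cast; ring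
        · rw [r2_half_odd _ _ _ d (by ring), F_half]; push_cast; ring
        · rw [r3_half_odd _ _ _ d (by ring), F_half]; push_cast; ring
      · have hbv : b = 2*(d-t) := by omega
        subst ht; subst hbv
        refine ⟨⟨d+1-(2*t+1)*(d-t), ?_⟩, ⟨-(t+1)*(2*d-2*t+1)-1, ?_⟩, ⟨-(2*t+1)*(d-t), ?_⟩⟩
        · rw [r1_half_odd _ _ _ d (by ring), F_half]; push_cast; ring
        · rw [r2_half_odd _ _ _ d (by ring), F_half]; push_cast; ring
        · rw [r3_half_odd _ _ _ d (by ring), F_half]; push_cast; ring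
end

section
/- Let A be an associative unital F-algebra containing orthogonal idempotents ι₀, ι₁ with ι₀ + ι₁ = 1, and elements ρ₀, ρ₁, ρ₂, ρ₃ indexed by ℤ/4 such that ρ_k = ι_{⟨k+1⟩}·ρ_k·ι_{⟨k⟩} where ⟨k⟩ denotes k mod 2, and such that ρ_k·ρ_l = 0 whenever l is not congruent to k − 1 modulo 4. Then the element U = Σ_{k ∈ ℤ/4} ρ_{k+3}·ρ_{k+2}·ρ_{k+1}·ρ_k commutes with each ρ_j and with each ι_j. In particular, if A is generated as an algebra by ι₀, ι₁, ρ₀, ρ₁, ρ₂, ρ₃, then U is central in A. -/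
/-!
Every summand of `U` is a cyclic path of length four, `ρ_{k+3} ρ_{k+2} ρ_{k+1} ρ_k`, which
starts and ends at the same idempotent `ι_⟨k⟩` (four steps change the parity an even number
of times); hence each summand commutes with `ι₀` and `ι₁`. Multiplying `U` by `ρ_j` on either
side kills every summand but one, and the two survivors are the same five-letter word
`ρ_j ρ_{j+3} ρ_{j+2} ρ_{j+1} ρ_j`.
-/

open Finset

section TorusAlgebra

variable {A : Type*} [Ring A] {ι : ZMod 2 → A} {ρ : ZMod 4 → A}

def torusCurvature (ρ : ZMod 4 → A) : A :=
  ∑ k : ZMod 4, ρ (k + 3) * ρ (k + 2) * ρ (k + 1) * ρ k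

section Rho

variable (hzero : ∀ k l : ZMod 4, l ≠ k - 1 → ρ k * ρ l = 0)
include hzero

theorem torusCurvature_mul_rho (j : ZMod 4) :
    torusCurvature ρ * ρ j = ρ j * ρ (j + 3) * ρ (j + 2) * ρ (j + 1) * ρ j := by
  rw [torusCurvature, sum_mul, sum_eq_single (j + 1)]
  · rw [show j + 1 + 3 = j by grind, show j + 1 + 2 = j + 3 by grind,
      show j + 1 + 1 = j + 2 by grind]
  · intro k _ hk
    rw [mul_assoc, hzero k j fun h => hk (by rw [h, sub_add_cancel]), mul_zero]
  · simp

theorem rho_mul_torusCurvature (j : ZMod 4) :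
    ρ j * torusCurvature ρ = ρ j * ρ (j + 3) * ρ (j + 2) * ρ (j + 1) * ρ j := by
  rw [torusCurvature, mul_sum, sum_eq_single j]
  · simp only [mul_assoc]
  · intro k _ hk
    rw [← mul_assoc, ← mul_assoc, ← mul_assoc, hzero j (k + 3) fun h => hk (by grind),
      zero_mul, zero_mul, zero_mul]
  · simp

theorem torusCurvature_commute_rho (j : ZMod 4) : Commute (torusCurvature ρ) (ρ j) :=
  (torusCurvature_mul_rho hzero j).trans (rho_mul_torusCurvature hzero j).symm

end Rho

section Iota

variable (hidem : ∀ a b : ZMod 2, ι a * ι b = if a = b then ι a else 0)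
  (hρ : ∀ k : ZMod 4, ρ k = ι ((k.val + 1 : ℕ) : ZMod 2) * ρ k * ι ((k.val : ℕ) : ZMod 2))
include hidem hρ

theorem rho_mul_iota (k : ZMod 4) (j : ZMod 2) :
    ρ k * ι j = if j = ((k.val : ℕ) : ZMod 2) then ρ k else 0 := by
  nth_rewrite 1 [hρ k]
  rw [mul_assoc, hidem]
  by_cases h : j = ((k.val : ℕ) : ZMod 2)
  · rw [if_pos h.symm, if_pos h, ← hρ k]
  · rw [if_neg (Ne.symm h), if_neg h, mul_zero]

theorem iota_mul_rho (k : ZMod 4) (j : ZMod 2) :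
    ι j * ρ k = if j = ((k.val + 1 : ℕ) : ZMod 2) then ρ k else 0 := by
  nth_rewrite 1 [hρ k]
  rw [← mul_assoc, ← mul_assoc, hidem]
  split_ifs with h
  · rw [h, ← hρ k]
  · rw [zero_mul, zero_mul]

theorem torusCurvature_commute_iota (j : ZMod 2) : Commute (torusCurvature ρ) (ι j) := by
  have hparity : ∀ k : ZMod 4, (((k + 3).val + 1 : ℕ) : ZMod 2) = ((k.val : ℕ) : ZMod 2) := by
    decide
  rw [Commute, SemiconjBy, torusCurvature, sum_mul, mul_sum]
  refine sum_congr rfl fun k _ => ?_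
  rw [mul_assoc _ (ρ k), rho_mul_iota hidem hρ, ← mul_assoc (ι j), ← mul_assoc (ι j),
    ← mul_assoc (ι j), iota_mul_rho hidem hρ, hparity]
  split_ifs <;> simp

end Iota

end TorusAlgebra

theorem stmt_14_general (F : Type*) [Field F] (A : Type*) [Ring A] [Algebra F A]
    (ι : ZMod 2 → A) (ρ : ZMod 4 → A)
    (hidem : ∀ a b : ZMod 2, ι a * ι b = if a = b then ι a else 0)
    (hρ : ∀ k : ZMod 4, ρ k = ι ((k.val + 1 : ℕ) : ZMod 2) * ρ k * ι ((k.val : ℕ) : ZMod 2))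
    (hzero : ∀ k l : ZMod 4, l ≠ k - 1 → ρ k * ρ l = 0) :
    let U : A := ∑ k : ZMod 4, ρ (k + 3) * ρ (k + 2) * ρ (k + 1) * ρ k
    (∀ j : ZMod 4, U * ρ j = ρ j * U) ∧
    (∀ j : ZMod 2, U * ι j = ι j * U) ∧
    (∀ x ∈ Algebra.adjoin F (Set.range ι ∪ Set.range ρ), U * x = x * U) := by
  intro U
  have hU_rho : ∀ j, Commute U (ρ j) := torusCurvature_commute_rho hzero
  have hU_iota : ∀ j, Commute U (ι j) := torusCurvature_commute_iota hidem hρ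
  have hgen : Set.range ι ∪ Set.range ρ ⊆ Subalgebra.centralizer F {U} := by
    rintro _ (⟨j, rfl⟩ | ⟨j, rfl⟩) _ rfl
    exacts [hU_iota j, hU_rho j]
  exact ⟨hU_rho, hU_iota, fun x hx =>
    (Subalgebra.mem_centralizer_iff F).mp (Algebra.adjoin_le hgen hx) U rfl⟩

/-- Let `A` be an associative unital `F`-algebra containing orthogonal
idempotents `ι₀, ι₁` with `ι₀ + ι₁ = 1`, and elements `ρ₀, ρ₁, ρ₂, ρ₃`
indexed by `ℤ/4` with `ρ_k = ι_{⟨k+1⟩}·ρ_k·ι_{⟨k⟩}` (where `⟨k⟩` is `k mod 2`)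
and `ρ_k·ρ_l = 0` unless `l ≡ k − 1 (mod 4)`. Then the element
`U = Σ_k ρ_{k+3}·ρ_{k+2}·ρ_{k+1}·ρ_k` commutes with each `ρ_j` and each `ι_j`;
in particular `U` commutes with every element of the subalgebra generated by
the `ι`'s and `ρ`'s. -/
theorem stmt_14 (F : Type*) [Field F] (A : Type*) [Ring A] [Algebra F A]
    (ι : ZMod 2 → A) (ρ : ZMod 4 → A)
    (hidem : ∀ a b : ZMod 2, ι a * ι b = if a = b then ι a else 0)
    (hone : ι 0 + ι 1 = 1)
    (hρ : ∀ k : ZMod 4, ρ k = ι ((k.val + 1 : ℕ) : ZMod 2) * ρ k * ι ((k.val : ℕ) : ZMod 2))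
    (hzero : ∀ k l : ZMod 4, l ≠ k - 1 → ρ k * ρ l = 0) :
    let U : A := ∑ k : ZMod 4, ρ (k + 3) * ρ (k + 2) * ρ (k + 1) * ρ k
    (∀ j : ZMod 4, U * ρ j = ρ j * U) ∧
    (∀ j : ZMod 2, U * ι j = ι j * U) ∧
    (∀ x ∈ Algebra.adjoin F (Set.range ι ∪ Set.range ρ), U * x = x * U) :=
  stmt_14_general F A ι ρ hidem hρ hzero
end

section
/- Let F = 𝔽₂ and T⁺ = F[U, U^{−1}]/(U·F[U]) as an F[U]-module. Consider the F[U]-module C = T⁺·a ⊕ T⁺·b₁ ⊕ T⁺·b₂ ⊕ T⁺·b₃ ⊕ T⁺·b₄ ⊕ T⁺·c₁ ⊕ T⁺·c₂ with the F[U]-linear map d determined by d(a) = U·b₂ + U·b₃, d(b₁) = U·c₁, d(b₂) = U·c₁ + U·c₂, d(b₃) = U·c₁ + U·c₂, d(b₄) = U·c₂, d(c₁) = d(c₂) = 0. Then d ∘ d = 0, and the homology ker(d)/im(d) is isomorphic as an F[U]-module to T⁺ ⊕ F³, where F³ carries the trivial U-action. -/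
/-!
On the tower `T⁺`, multiplication by `U` is surjective with kernel `𝔽₂·u₀`. Hence the cycles of
`C` are the `f` with `f a`, `f b₁ + f b₂ + f b₃` and `f b₂ + f b₃ + f b₄` in `𝔽₂·u₀`, and the
boundaries are exactly the `f` with `f a = f b₁ = f b₄ = 0` and `f b₂ = f b₃`. So every homology
class has a unique representative `t·(b₁ + b₂ + b₄) + c₀u₀·a + c₁u₀·b₁ + c₂u₀·b₄` with `t ∈ T⁺`
and `c ∈ 𝔽₂³`, and `U` sends it to the representative of `(U·t, 0)`.
-/

open Polynomial

section Tower

variable {K : Type*} [CommRing K] {T : Type*} [AddCommGroup T] [Module K T] [Module K[X] T]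
  [IsScalarTower K K[X] T] (b : Module.Basis ℕ K T)

theorem X_smul_surjective (hbs : ∀ n, (X : K[X]) • b (n + 1) = b n) :
    Function.Surjective fun t : T => (X : K[X]) • t := by
  suffices (DistribSMul.toLinearMap K T (X : K[X])).range = ⊤ from LinearMap.range_eq_top.mp this
  rw [eq_top_iff, ← b.span_eq, Submodule.span_le]
  rintro _ ⟨n, rfl⟩
  exact ⟨b (n + 1), hbs n⟩

theorem repr_X_smul_apply (hb0 : (X : K[X]) • b 0 = 0)
    (hbs : ∀ n, (X : K[X]) • b (n + 1) = b n) (t : T) (n : ℕ) :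
    b.repr ((X : K[X]) • t) n = b.repr t (n + 1) := by
  suffices Finsupp.lapply n ∘ₗ b.repr.toLinearMap ∘ₗ DistribSMul.toLinearMap K T (X : K[X]) =
      Finsupp.lapply (n + 1) ∘ₗ b.repr.toLinearMap from LinearMap.congr_fun this t
  refine b.ext fun m => ?_
  cases m with
  | zero => simp [hb0]
  | succ m => simp [hbs, Finsupp.single_apply]

theorem exists_eq_smul_basis_zero_of_X_smul_eq_zero (hb0 : (X : K[X]) • b 0 = 0)
    (hbs : ∀ n, (X : K[X]) • b (n + 1) = b n) {t : T} (ht : (X : K[X]) • t = 0) :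
    ∃ c : K, t = c • b 0 := by
  refine ⟨b.repr t 0, b.ext_elem fun n => ?_⟩
  cases n with
  | zero => simp
  | succ n => simp [← repr_X_smul_apply b hb0 hbs, ht]

theorem X_smul_smul_basis_zero (hb0 : (X : K[X]) • b 0 = 0) (c : K) : (X : K[X]) • c • b 0 = 0 := by
  rw [smul_comm, hb0, smul_zero]

end Tower

namespace SpliceComplex

local notation "U" => (X : (ZMod 2)[X])

variable {T : Type*} [AddCommGroup T]

section Differential

variable [Module (ZMod 2)[X] T]

variable (T) in
noncomputable def spliceD : (Fin 7 → T) →ₗ[(ZMod 2)[X]] (Fin 7 → T) where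
  toFun f := ![0, 0, U • f 0, U • f 0, 0, U • (f 1 + f 2 + f 3), U • (f 2 + f 3 + f 4)]
  map_add' f g := by
    ext j
    fin_cases j <;> simp [smul_add] <;> abel
  map_smul' r f := by
    ext j
    fin_cases j <;> simp [smul_comm r, smul_add]

theorem spliceD_apply (f : Fin 7 → T) :
    spliceD T f = ![0, 0, U • f 0, U • f 0, 0, U • (f 1 + f 2 + f 3), U • (f 2 + f 3 + f 4)] :=
  rfl

theorem spliceD_comp_self : spliceD T ∘ₗ spliceD T = 0 := by
  have h2 (t : T) : t + t = 0 := by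
    rw [← two_smul (ZMod 2)[X], CharTwo.two_eq_zero (R := (ZMod 2)[X]), zero_smul]
  exact LinearMap.ext fun f => funext fun j => by
    fin_cases j <;> simp [spliceD_apply, h2]

theorem mem_ker_spliceD_iff (f : Fin 7 → T) :
    f ∈ LinearMap.ker (spliceD T) ↔
      U • f 0 = 0 ∧ U • (f 1 + f 2 + f 3) = 0 ∧ U • (f 2 + f 3 + f 4) = 0 := by
  simp [spliceD_apply, funext_iff, Fin.forall_fin_succ]

theorem coords_of_mem_range_spliceD {g : Fin 7 → T} (hg : g ∈ LinearMap.range (spliceD T)) :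
    g 0 = 0 ∧ g 1 = 0 ∧ g 4 = 0 ∧ g 2 = g 3 := by
  obtain ⟨f, rfl⟩ := hg
  simp [spliceD_apply]

theorem mem_range_spliceD_of_coords (hU : Function.Surjective fun t : T => U • t)
    {g : Fin 7 → T} (h0 : g 0 = 0) (h1 : g 1 = 0) (h4 : g 4 = 0) (h23 : g 2 = g 3) :
    g ∈ LinearMap.range (spliceD T) := by
  obtain ⟨a, ha⟩ := hU (g 2)
  obtain ⟨b₁, hb₁⟩ := hU (g 5)
  obtain ⟨b₄, hb₄⟩ := hU (g 6)
  refine ⟨![a, b₁, 0, 0, b₄, 0, 0], funext fun j => ?_⟩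
  fin_cases j <;> simp_all [spliceD_apply]

variable (T) in
abbrev spliceHomology : Type _ :=
  LinearMap.ker (spliceD T) ⧸ (LinearMap.range (spliceD T)).comap (LinearMap.ker (spliceD T)).subtype

end Differential

section Representatives

variable [Module (ZMod 2) T] (b : Module.Basis ℕ (ZMod 2) T)

noncomputable def cycleRep : T × (Fin 3 → ZMod 2) →+ (Fin 7 → T) where
  toFun p := ![p.2 0 • b 0, p.1 + p.2 1 • b 0, p.1, 0, p.1 + p.2 2 • b 0, 0, 0]
  map_zero' := by
    ext j
    fin_cases j <;> simp
  map_add' p q := by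
    ext j
    fin_cases j <;> simp [add_smul] <;> abel

theorem cycleRep_apply (p : T × (Fin 3 → ZMod 2)) :
    cycleRep b p = ![p.2 0 • b 0, p.1 + p.2 1 • b 0, p.1, 0, p.1 + p.2 2 • b 0, 0, 0] :=
  rfl

end Representatives

variable [Module (ZMod 2) T] [Module (ZMod 2)[X] T] [IsScalarTower (ZMod 2) (ZMod 2)[X] T]
  (b : Module.Basis ℕ (ZMod 2) T)

theorem cycleRep_mem_ker (hb0 : U • b 0 = 0) (p : T × (Fin 3 → ZMod 2)) :
    cycleRep b p ∈ LinearMap.ker (spliceD T) := by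
  rw [mem_ker_spliceD_iff]
  simp [cycleRep_apply, X_smul_smul_basis_zero b hb0, add_comm p.1, add_assoc, ZModModule.add_self]

noncomputable def homologyClass (hb0 : U • b 0 = 0) : T × (Fin 3 → ZMod 2) →+ spliceHomology T :=
  (Submodule.mkQ _).toAddMonoidHom.comp
    ((cycleRep b).codRestrict (LinearMap.ker (spliceD T)) (cycleRep_mem_ker b hb0))

theorem homologyClass_apply (hb0 : U • b 0 = 0) (p : T × (Fin 3 → ZMod 2)) :
    homologyClass b hb0 p = Submodule.Quotient.mk ⟨cycleRep b p, cycleRep_mem_ker b hb0 p⟩ :=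
  rfl

theorem homologyClass_injective (hb0 : U • b 0 = 0) : Function.Injective (homologyClass b hb0) := by
  refine (injective_iff_map_eq_zero _).2 fun ⟨t, c⟩ hp => ?_
  rw [homologyClass_apply, Submodule.Quotient.mk_eq_zero, Submodule.mem_comap] at hp
  obtain ⟨h0, h1, h4, h23⟩ := coords_of_mem_range_spliceD hp
  simp only [Submodule.subtype_apply, cycleRep_apply, Matrix.cons_val] at h0 h1 h4 h23
  subst h23
  simp only [zero_add, smul_eq_zero, b.ne_zero, or_false] at h0 h1 h4
  ext i
  · rfl
  · fin_cases i <;> assumption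

theorem homologyClass_surjective (hb0 : U • b 0 = 0) (hbs : ∀ n, U • b (n + 1) = b n) :
    Function.Surjective (homologyClass b hb0) := by
  intro x
  obtain ⟨⟨f, hf⟩, rfl⟩ := Submodule.Quotient.mk_surjective _ x
  obtain ⟨k0, k1, k2⟩ := (mem_ker_spliceD_iff f).1 hf
  obtain ⟨c₀, hc₀⟩ := exists_eq_smul_basis_zero_of_X_smul_eq_zero b hb0 hbs k0
  obtain ⟨c₁, hc₁⟩ := exists_eq_smul_basis_zero_of_X_smul_eq_zero b hb0 hbs k1
  obtain ⟨c₂, hc₂⟩ := exists_eq_smul_basis_zero_of_X_smul_eq_zero b hb0 hbs k2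
  refine ⟨(f 2 + f 3, ![c₀, c₁, c₂]), ?_⟩
  rw [homologyClass_apply, Submodule.Quotient.eq, Submodule.mem_comap]
  apply mem_range_spliceD_of_coords (X_smul_surjective b hbs) <;>
    simp only [Submodule.coe_subtype, AddSubgroupClass.coe_sub, Pi.sub_apply, cycleRep_apply,
      Matrix.cons_val, ← hc₀, ← hc₁, ← hc₂] <;>
    abel_nf <;>
    simp [two_zsmul, ZModModule.add_self, ZModModule.neg_eq_self]

theorem X_smul_homologyClass (hb0 : U • b 0 = 0) (p : T × (Fin 3 → ZMod 2)) :
    U • homologyClass b hb0 p = homologyClass b hb0 (U • p.1, 0) := by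
  rw [homologyClass_apply, homologyClass_apply, ← Submodule.Quotient.mk_smul]
  congr 1
  ext j
  fin_cases j <;> simp [cycleRep_apply, X_smul_smul_basis_zero b hb0]

end SpliceComplex

open SpliceComplex in
/-- Let `F = 𝔽₂` and let `T⁺` be an `F[U]`-module with `F`-basis
`{u_n : n ≥ 0}` satisfying `U·u_{n+1} = u_n`, `U·u_0 = 0` (the standard tower).
Let `C = T⁺·a ⊕ T⁺·b₁ ⊕ T⁺·b₂ ⊕ T⁺·b₃ ⊕ T⁺·b₄ ⊕ T⁺·c₁ ⊕ T⁺·c₂`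
(coordinates `0,…,6`) with the `F[U]`-linear differential `d` determined by
`d(a) = U·b₂ + U·b₃`, `d(b₁) = U·c₁`, `d(b₂) = U·c₁ + U·c₂`,
`d(b₃) = U·c₁ + U·c₂`, `d(b₄) = U·c₂`, `d(c₁) = d(c₂) = 0`. Then `d ∘ d = 0`
and the homology `ker d / im d` is isomorphic as an `F[U]`-module to
`T⁺ ⊕ F³` with trivial `U`-action on `F³` (expressed as an additive
isomorphism intertwining the `U`-actions; over `𝔽₂` additive maps are
automatically `F`-linear). -/
theorem stmt_16 (T : Type*) [AddCommGroup T]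
    [Module (ZMod 2) T] [Module (Polynomial (ZMod 2)) T]
    [IsScalarTower (ZMod 2) (Polynomial (ZMod 2)) T]
    (b : Module.Basis ℕ (ZMod 2) T)
    (hb0 : (X : Polynomial (ZMod 2)) • b 0 = 0)
    (hbs : ∀ n : ℕ, (X : Polynomial (ZMod 2)) • b (n + 1) = b n)
    (d : (Fin 7 → T) →ₗ[Polynomial (ZMod 2)] (Fin 7 → T))
    (hd : ∀ f : Fin 7 → T, d f = fun j =>
      if j = 2 then (X : Polynomial (ZMod 2)) • f 0
      else if j = 3 then (X : Polynomial (ZMod 2)) • f 0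
      else if j = 5 then (X : Polynomial (ZMod 2)) • (f 1 + f 2 + f 3)
      else if j = 6 then (X : Polynomial (ZMod 2)) • (f 2 + f 3 + f 4)
      else 0) :
    (d ∘ₗ d = 0) ∧
    ∃ e : (LinearMap.ker d ⧸
        Submodule.comap (LinearMap.ker d).subtype (LinearMap.range d))
        ≃+ T × (Fin 3 → ZMod 2),
      ∀ h, e ((X : Polynomial (ZMod 2)) • h)
        = ((X : Polynomial (ZMod 2)) • (e h).1, 0) := by
  obtain rfl : d = spliceD T := LinearMap.ext fun f => by
    rw [hd]
    ext j
    fin_cases j <;> rfl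
  let e := AddEquiv.ofBijective (homologyClass b hb0)
    ⟨homologyClass_injective b hb0, homologyClass_surjective b hb0 hbs⟩
  refine ⟨spliceD_comp_self, e.symm, fun h => ?_⟩
  obtain ⟨p, rfl⟩ := e.surjective h
  rw [e.symm_apply_apply, e.symm_apply_eq]
  exact X_smul_homologyClass b hb0 p
end
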